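/- arXiv:1302.3887 — 4 statements merged into one kernel-verified Lean document; each statement's English description precedes it below -/
import Mathlib

section
/- Let X be a quasiconvex metric space, Ω ⊆ X a bounded domain, and γ : [a,b] → Ω a continuous curve. Then the arc length of γ computed with respect to d, with respect to the Mazurkiewicz distance dM, and with respect to the inner metric din all coincide; that is, the suprema over all partitions a = t₀ ≤ t₁ ≤ … ≤ tₙ = b of the sums Σᵢ ρ(γ(tᵢ), γ(tᵢ₊₁)) are equal for ρ = d, ρ = dM and ρ = din. -/
open Set MeasureTheory Filter ENNReal NNReal Metric Topology

noncomputable section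

/-- Extended absolute value of the "difference" of two extended reals; with Mathlib's
`EReal` subtraction conventions, `erealAbs (a - b) = ∞` whenever both `a` and `b`
are infinite, matching the convention for the upper gradient inequality. -/
def erealAbs (a : EReal) : ℝ≥0∞ :=
  if a = ⊤ ∨ a = ⊥ then ⊤ else ENNReal.ofReal |a.toReal|

/-- Variation of `γ` over `[a,b]` computed with respect to an arbitrary
distance-like function `ρ`, as a supremum over partitions
`a = t 0 ≤ t 1 ≤ ⋯ ≤ t n = b`. -/
def variationWith {Y : Type*} (ρ : Y → Y → ℝ≥0∞) (γ : ℝ → Y) (a b : ℝ) : ℝ≥0∞ :=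
  ⨆ P ∈ {P : ℕ × (ℕ → ℝ) |
      Monotone P.2 ∧ (∀ i, P.2 i ∈ Set.Icc a b) ∧ P.2 0 = a ∧ P.2 P.1 = b},
    ∑ i ∈ Finset.range P.1, ρ (γ (P.2 i)) (γ (P.2 (i + 1)))

/-- `γ : [0,L] → Y` is parameterized by arc length with respect to `ρ`. -/
def IsArcLengthParamWith {Y : Type*} (ρ : Y → Y → ℝ≥0∞) (γ : ℝ → Y) (L : ℝ) : Prop :=
  ∀ s t : ℝ, s ∈ Set.Icc 0 L → t ∈ Set.Icc 0 L → s ≤ t →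
    variationWith ρ γ s t = ENNReal.ofReal (t - s)

/-- `g` is an upper gradient of `f` on `S` with respect to the distance `ρ`:
for every (nonconstant, compact, rectifiable) curve in `S` parameterized by
arc length, the upper gradient inequality holds. -/
def IsUpperGradientWith {Y : Type*} (ρ : Y → Y → ℝ≥0∞) (S : Set Y)
    (g : Y → ℝ≥0∞) (f : Y → EReal) : Prop :=
  ∀ (γ : ℝ → Y) (L : ℝ), 0 < L → Set.MapsTo γ (Set.Icc 0 L) S →
    IsArcLengthParamWith ρ γ L →
    erealAbs (f (γ L) - f (γ 0)) ≤ ∫⁻ t in Set.Icc 0 L, g (γ t)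

/-- Upper gradient on `S` with respect to the ambient metric. -/
def IsUpperGradientOn {Y : Type*} [PseudoEMetricSpace Y] (S : Set Y)
    (g : Y → ℝ≥0∞) (f : Y → EReal) : Prop :=
  IsUpperGradientWith (fun x y => edist x y) S g f

/-- The `p`-th power of the Newtonian norm of `f` on `S` with respect to the
measure `m` and the distance `ρ`:
`∫_S |f|^p dm + inf {∫_S g^p dm : g a Borel upper gradient of f on S w.r.t. ρ}`. -/
def npEnergyWith {Y : Type*} [MeasurableSpace Y] (m : Measure Y) (p : ℝ)
    (ρ : Y → Y → ℝ≥0∞) (S : Set Y) (f : Y → ℝ) : ℝ≥0∞ :=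
  (∫⁻ y in S, ENNReal.ofReal |f y| ^ p ∂m) +
    ⨅ g ∈ {g : Y → ℝ≥0∞ | Measurable g ∧
        IsUpperGradientWith ρ S g (fun y => (f y : EReal))},
      ∫⁻ y in S, g y ^ p ∂m

/-- The `p`-th power of the Newtonian norm of `f` on `S ⊆ Y` (w.r.t. the ambient metric). -/
def npEnergyOn {Y : Type*} [PseudoEMetricSpace Y] [MeasurableSpace Y]
    (m : Measure Y) (p : ℝ) (S : Set Y) (f : Y → ℝ) : ℝ≥0∞ :=
  npEnergyWith m p (fun x y => edist x y) S f

/-- `f ∈ N^{1,p}(S, m)`. -/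
def MemNp {Y : Type*} [PseudoEMetricSpace Y] [MeasurableSpace Y]
    (m : Measure Y) (p : ℝ) (S : Set Y) (f : Y → ℝ) : Prop :=
  Measurable f ∧ npEnergyOn m p S f ≠ ⊤

/-- The Sobolev capacity `C_p(E; S)` of `E ⊆ S`. -/
def CpOn {Y : Type*} [PseudoEMetricSpace Y] [MeasurableSpace Y]
    (m : Measure Y) (p : ℝ) (S E : Set Y) : ℝ≥0∞ :=
  ⨅ u ∈ {u : Y → ℝ | MemNp m p S u ∧ ∀ x ∈ E, u x = 1}, npEnergyOn m p S u

/-- The capacity `bC_p(E; S)` of `E ⊆ closure S`. -/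
def bCpOn {Y : Type*} [PseudoEMetricSpace Y] [MeasurableSpace Y]
    (m : Measure Y) (p : ℝ) (S E : Set Y) : ℝ≥0∞ :=
  ⨅ u ∈ {u : Y → ℝ | MemNp m p S u ∧ (∀ x ∈ E ∩ S, 1 ≤ u x) ∧
      ∀ x ∈ E ∩ (closure S \ S),
        (1 : EReal) ≤ Filter.liminf (fun y => (u y : EReal)) (nhdsWithin x S)},
    npEnergyOn m p S u

/-- The Mazurkiewicz distance on `S`. -/
def mazDist {Y : Type*} [PseudoEMetricSpace Y] (S : Set Y) (x y : Y) : ℝ≥0∞ :=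
  ⨅ E ∈ {E : Set Y | E ⊆ S ∧ IsConnected E ∧ x ∈ E ∧ y ∈ E}, EMetric.diam E

/-- The inner metric on `S`: the infimum of lengths of curves in `S` joining
`x` and `y` (`∞` if there are none). -/
def innerDist {Y : Type*} [PseudoEMetricSpace Y] (S : Set Y) (x y : Y) : ℝ≥0∞ :=
  ⨅ c ∈ {c : (ℝ → Y) × ℝ × ℝ | c.2.1 ≤ c.2.2 ∧
      ContinuousOn c.1 (Set.Icc c.2.1 c.2.2) ∧
      Set.MapsTo c.1 (Set.Icc c.2.1 c.2.2) S ∧ c.1 c.2.1 = x ∧ c.1 c.2.2 = y},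
    eVariationOn c.1 (Set.Icc c.2.1 c.2.2)

/-- `S` is `L`-quasiconvex: any two points of `S` can be joined by a curve in `S`
of length at most `L` times their distance. -/
def LQuasiconvexOn {Y : Type*} [PseudoMetricSpace Y] (S : Set Y) (L : ℝ) : Prop :=
  ∀ x ∈ S, ∀ y ∈ S, ∃ (γ : ℝ → Y) (a b : ℝ), a ≤ b ∧
    ContinuousOn γ (Set.Icc a b) ∧ Set.MapsTo γ (Set.Icc a b) S ∧
    γ a = x ∧ γ b = y ∧ eVariationOn γ (Set.Icc a b) ≤ ENNReal.ofReal (L * dist x y)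

/-- A quasiconvex metric space. -/
def QuasiconvexSpace (Y : Type*) [PseudoMetricSpace Y] : Prop :=
  ∃ L : ℝ, 1 ≤ L ∧ LQuasiconvexOn (Set.univ : Set Y) L

/-- A bounded domain: a bounded nonempty open connected set. -/
def IsBoundedDomain {Y : Type*} [PseudoMetricSpace Y] (Ω : Set Y) : Prop :=
  IsOpen Ω ∧ IsConnected Ω ∧ Bornology.IsBounded Ω

/-- `Ω` is finitely connected at the boundary. -/
def FinConnAtBoundary {Y : Type*} [MetricSpace Y] (Ω : Set Y) : Prop :=
  ∀ x₀ ∈ frontier Ω, ∀ r : ℝ, 0 < r → ∃ G : Set Y, IsOpen G ∧ x₀ ∈ G ∧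
    G ⊆ Metric.ball x₀ r ∧
    {C : Set Y | ∃ x ∈ G ∩ Ω, C = connectedComponentIn (G ∩ Ω) x}.Finite

/-- The standing assumption on the measure: every ball has positive finite measure. -/
def BallRegular {Y : Type*} [PseudoMetricSpace Y] [MeasurableSpace Y]
    (m : Measure Y) : Prop :=
  ∀ (x : Y) (r : ℝ), 0 < r → 0 < m (Metric.ball x r) ∧ m (Metric.ball x r) < ⊤

/-- The measure `m` is (globally) doubling. -/
def DoublingMeasure' {Y : Type*} [PseudoMetricSpace Y] [MeasurableSpace Y]
    (m : Measure Y) : Prop :=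
  ∃ C : ℝ≥0, 0 < C ∧ ∀ (x : Y) (r : ℝ), 0 < r →
    m (Metric.ball x (2 * r)) ≤ C * m (Metric.ball x r)

/-- `(Y, m)` supports a `p`-Poincaré inequality. -/
def PoincareInequality {Y : Type*} [MetricSpace Y] [MeasurableSpace Y]
    (m : Measure Y) (p : ℝ) : Prop :=
  ∃ C lam : ℝ, 0 < C ∧ 1 ≤ lam ∧
    ∀ (x : Y) (r : ℝ), 0 < r → ∀ f : Y → ℝ, Integrable f m →
      ∀ g : Y → ℝ≥0∞, Measurable g →
        IsUpperGradientOn (Set.univ : Set Y) g (fun y => (f y : EReal)) →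
        ENNReal.ofReal (⨍ y in Metric.ball x r,
            |f y - ⨍ z in Metric.ball x r, f z ∂m| ∂m) ≤
          ENNReal.ofReal (C * Metric.diam (Metric.ball x r)) *
            ((∫⁻ y in Metric.ball x (lam * r), g y ^ p ∂m) /
              m (Metric.ball x (lam * r))) ^ (1 / p)

-- aux lemmas
lemma variationWith_mono' {Y : Type*} {ρ₁ ρ₂ : Y → Y → ℝ≥0∞} (h : ∀ x y, ρ₁ x y ≤ ρ₂ x y)
    (γ : ℝ → Y) (a b : ℝ) : variationWith ρ₁ γ a b ≤ variationWith ρ₂ γ a b :=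
  iSup₂_le fun P hP => le_iSup₂_of_le P hP (Finset.sum_le_sum fun _ _ => h _ _)

lemma edist_le_mazDist' {Y : Type*} [PseudoEMetricSpace Y] (S : Set Y) (x y : Y) :
    edist x y ≤ mazDist S x y :=
  le_iInf₂ fun _ hE => EMetric.edist_le_diam_of_mem hE.2.2.1 hE.2.2.2

lemma mazDist_le_innerDist' {Y : Type*} [PseudoEMetricSpace Y] (S : Set Y) (x y : Y) :
    mazDist S x y ≤ innerDist S x y := by
  refine le_iInf₂ fun c hc => ?_
  obtain ⟨hab, hcont, hmaps, hx, hy⟩ := hc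
  refine iInf₂_le_of_le (c.1 '' Set.Icc c.2.1 c.2.2)
    ⟨hmaps.image_subset, (isConnected_Icc hab).image _ hcont,
      ⟨c.2.1, ⟨le_rfl, hab⟩, hx⟩, ⟨c.2.2, ⟨hab, le_rfl⟩, hy⟩⟩ ?_
  refine EMetric.diam_le fun u hu v hv => ?_
  obtain ⟨s, hs, rfl⟩ := hu
  obtain ⟨t, ht, rfl⟩ := hv
  exact eVariationOn.edist_le c.1 hs ht

lemma sum_eVar' {Y : Type*} [PseudoEMetricSpace Y] (γ : ℝ → Y) (t : ℕ → ℝ)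
    (ht : Monotone t) (n : ℕ) :
    ∑ i ∈ Finset.range n, eVariationOn γ (Set.Icc (t i) (t (i + 1))) =
      eVariationOn γ (Set.Icc (t 0) (t n)) := by
  induction n with
  | zero =>
    rw [Finset.range_zero, Finset.sum_empty, Set.Icc_self]
    exact (eVariationOn.subsingleton γ Set.subsingleton_singleton).symm
  | succ n ih =>
    rw [Finset.sum_range_succ, ih]
    have := eVariationOn.Icc_add_Icc (s := Set.univ) γ (ht (Nat.zero_le n))
      (ht (Nat.le_succ n)) (Set.mem_univ (t n))
    simpa using this

lemma innerVar_le_eVar {X : Type*} [MetricSpace X] (Ω : Set X) (γ : ℝ → X) (a b : ℝ)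
    (hcont : ContinuousOn γ (Set.Icc a b)) (hmaps : Set.MapsTo γ (Set.Icc a b) Ω) :
    variationWith (innerDist Ω) γ a b ≤ eVariationOn γ (Set.Icc a b) := by
  refine iSup₂_le fun P hP => ?_
  obtain ⟨hmono, hmem, h0, hN⟩ := hP
  calc ∑ i ∈ Finset.range P.1, innerDist Ω (γ (P.2 i)) (γ (P.2 (i + 1)))
      ≤ ∑ i ∈ Finset.range P.1, eVariationOn γ (Set.Icc (P.2 i) (P.2 (i + 1))) := by
        refine Finset.sum_le_sum fun i _ => ?_
        have hsub : Set.Icc (P.2 i) (P.2 (i + 1)) ⊆ Set.Icc a b :=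
          Set.Icc_subset_Icc (hmem i).1 (hmem (i + 1)).2
        exact iInf₂_le_of_le (γ, P.2 i, P.2 (i + 1))
          ⟨hmono (Nat.le_succ i), hcont.mono hsub, hmaps.mono_left hsub, rfl, rfl⟩ le_rfl
    _ = eVariationOn γ (Set.Icc a b) := by rw [sum_eVar' γ P.2 hmono P.1, h0, hN]

lemma eVar_le_edistVar {Y : Type*} [PseudoEMetricSpace Y] (γ : ℝ → Y) (a b : ℝ) (hab : a ≤ b) :
    eVariationOn γ (Set.Icc a b) ≤ variationWith (fun x y => edist x y) γ a b := by
  rw [eVariationOn]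
  refine iSup_le fun p => ?_
  obtain ⟨n, u, hu, hus⟩ := p
  set v : ℕ → ℝ := fun k => if k = 0 then a else if k ≤ n + 1 then u (k - 1) else b with hv
  have hval : ∀ k, k ≠ 0 → k ≤ n + 1 → v k = u (k - 1) := by
    intro k h1 h2
    show (if k = 0 then a else if k ≤ n + 1 then u (k - 1) else b) = _
    rw [if_neg h1, if_pos h2]
  have hvalb : ∀ k, ¬ k ≤ n + 1 → v k = b := by
    intro k h2
    show (if k = 0 then a else if k ≤ n + 1 then u (k - 1) else b) = _
    rw [if_neg (by omega), if_neg h2]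
  have hvmono : Monotone v := by
    refine monotone_nat_of_le_succ fun k => ?_
    rcases Nat.eq_zero_or_pos k with rfl | hk
    · have e0 : v 0 = a := by simp [hv]
      have e1 : v 1 = u 0 := hval 1 one_ne_zero (by omega)
      rw [e0, e1]; exact (hus 0).1
    · by_cases h2 : k + 1 ≤ n + 1
      · rw [hval k hk.ne' (by omega), hval (k + 1) (by omega) h2]
        exact hu (by omega)
      · by_cases h3 : k ≤ n + 1
        · rw [hval k hk.ne' h3, hvalb (k + 1) h2]
          exact (hus _).2
        · rw [hvalb k h3, hvalb (k + 1) h2]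
  have hvmem : ∀ k, v k ∈ Set.Icc a b := by
    intro k
    simp only [hv]
    split_ifs
    · exact ⟨le_rfl, hab⟩
    · exact hus _
    · exact ⟨hab, le_rfl⟩
  have hv0 : v 0 = a := by simp [hv]
  have hvN : v (n + 2) = b := by simp [hv]
  refine le_iSup₂_of_le (n + 2, v) ⟨hvmono, hvmem, hv0, hvN⟩ ?_
  have hterm : ∀ i ∈ Finset.range n,
      edist (γ (u (i + 1))) (γ (u i)) = edist (γ (v (1 + i))) (γ (v (1 + i + 1))) := by
    intro i hi
    simp only [Finset.mem_range] at hi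
    have e1 : v (1 + i) = u i := by
      rw [hval (1 + i) (by omega) (by omega)]; congr 1; omega
    have e2 : v (1 + i + 1) = u (i + 1) := by
      rw [hval (1 + i + 1) (by omega) (by omega)]; congr 1; omega
    rw [e1, e2, edist_comm]
  calc ∑ i ∈ Finset.range n, edist (γ (u (i + 1))) (γ (u i))
      = ∑ i ∈ Finset.range n, edist (γ (v (1 + i))) (γ (v (1 + i + 1))) :=
        Finset.sum_congr rfl hterm
    _ = ∑ k ∈ Finset.Ico 1 (n + 1), edist (γ (v k)) (γ (v (k + 1))) := by
        rw [Finset.sum_Ico_eq_sum_range]; simp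
    _ ≤ ∑ k ∈ Finset.range (n + 2), edist (γ (v k)) (γ (v (k + 1))) := by
        refine Finset.sum_le_sum_of_subset fun k hk => ?_
        simp only [Finset.mem_Ico] at hk
        simp only [Finset.mem_range]; omega


/-! ### Statement 2 -/

theorem statement2 {X : Type*} [MetricSpace X] (hX : QuasiconvexSpace X)
    (Ω : Set X) (hΩ : IsBoundedDomain Ω) (γ : ℝ → X) (a b : ℝ) (hab : a ≤ b)
    (hcont : ContinuousOn γ (Set.Icc a b)) (hmaps : Set.MapsTo γ (Set.Icc a b) Ω) :
    variationWith (fun x y => edist x y) γ a b = variationWith (mazDist Ω) γ a b ∧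
    variationWith (mazDist Ω) γ a b = variationWith (innerDist Ω) γ a b := by
  have h1 := variationWith_mono' (edist_le_mazDist' Ω) γ a b
  have h2 := variationWith_mono' (mazDist_le_innerDist' Ω) γ a b
  have h3 := innerVar_le_eVar Ω γ a b hcont hmaps
  have h4 := eVar_le_edistVar γ a b hab
  exact ⟨le_antisymm h1 (h2.trans (h3.trans h4)),
    le_antisymm h2 (h3.trans (h4.trans h1))⟩

end
end

section
/- Let X be a metric measure space, Ω ⊆ X open, 1 ≤ p < ∞, and assume that every function in N^{1,p}(Ω) is quasicontinuous in Ω (with respect to the capacity Cp(·;Ω)). Then bCp(·;Ω) is an outer capacity, i.e. for every E ⊆ clΩ, bCp(E;Ω) = inf{bCp(G;Ω) : G ⊇ E, G relatively open in clΩ}. -/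
/-! Let `u` be a test function for `bCp(E)` and `0 < t < 1`. Quasicontinuity gives an open `U`
of small capacity off which `u` is continuous, hence a `v` equal to `1` on `U` with small
Newtonian norm. Continuity of `u` on `Ω \ U`, and the liminf condition at boundary points, give an
open `V ⊇ E` with `u > t` on `(V ∩ Ω) \ U`; so `(u⁺ + v⁺) / t` is a test function for
`(U ∪ V) ∩ cl Ω`. Minkowski's inequality for `N^{1,p}` norms yields
`t · bCp((U ∪ V) ∩ cl Ω)^{1/p} ≤ ‖u‖ + ‖v‖`, and we let `‖v‖ → 0` and `t → 1`. -/

open Set MeasureTheory Filter ENNReal NNReal Metric Topology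

noncomputable section

lemma erealAbs_coe_sub (a b : ℝ) :
    erealAbs ((a : EReal) - (b : EReal)) = ENNReal.ofReal |a - b| := by
  simp [erealAbs, ← EReal.coe_sub]

section UpperGradient

variable {Y : Type*} {ρ : Y → Y → ℝ≥0∞} {S : Set Y} {g g₁ g₂ : Y → ℝ≥0∞} {f f₁ f₂ : Y → ℝ}

lemma IsUpperGradientWith.comp_lipschitzWith {φ : ℝ → ℝ} (hφ : LipschitzWith 1 φ)
    (h : IsUpperGradientWith ρ S g fun y => (f y : EReal)) :
    IsUpperGradientWith ρ S g fun y => (φ (f y) : EReal) := by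
  intro γ L hL hγS hγ
  have hf := h γ L hL hγS hγ
  rw [erealAbs_coe_sub] at hf ⊢
  refine le_trans (ENNReal.ofReal_le_ofReal ?_) hf
  simpa [Real.dist_eq] using hφ.dist_le_mul (f (γ L)) (f (γ 0))

lemma IsUpperGradientWith.add (h₁ : IsUpperGradientWith ρ S g₁ fun y => (f₁ y : EReal))
    (h₂ : IsUpperGradientWith ρ S g₂ fun y => (f₂ y : EReal)) :
    IsUpperGradientWith ρ S (g₁ + g₂) fun y => ((f₁ + f₂) y : EReal) := by
  intro γ L hL hγS hγ
  have hf₁ := h₁ γ L hL hγS hγ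
  have hf₂ := h₂ γ L hL hγS hγ
  rw [erealAbs_coe_sub] at hf₁ hf₂ ⊢
  calc ENNReal.ofReal |(f₁ + f₂) (γ L) - (f₁ + f₂) (γ 0)|
      ≤ ENNReal.ofReal |f₁ (γ L) - f₁ (γ 0)| + ENNReal.ofReal |f₂ (γ L) - f₂ (γ 0)| := by
        rw [← ENNReal.ofReal_add (abs_nonneg _) (abs_nonneg _), Pi.add_apply, Pi.add_apply,
          add_sub_add_comm]
        exact ENNReal.ofReal_le_ofReal (abs_add_le _ _)
    _ ≤ (∫⁻ t in Icc 0 L, g₁ (γ t)) + ∫⁻ t in Icc 0 L, g₂ (γ t) := add_le_add hf₁ hf₂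
    _ ≤ ∫⁻ t in Icc 0 L, (g₁ + g₂) (γ t) := le_lintegral_add _ _

lemma IsUpperGradientWith.const_mul {c : ℝ} (hc : 0 ≤ c)
    (h : IsUpperGradientWith ρ S g fun y => (f y : EReal)) :
    IsUpperGradientWith ρ S (fun y => ENNReal.ofReal c * g y)
      fun y => ((c * f y : ℝ) : EReal) := by
  intro γ L hL hγS hγ
  have hf := h γ L hL hγS hγ
  rw [erealAbs_coe_sub] at hf ⊢
  rw [← mul_sub, abs_mul, abs_of_nonneg hc, ENNReal.ofReal_mul hc,
    lintegral_const_mul' _ _ ENNReal.ofReal_ne_top]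
  gcongr

end UpperGradient

lemma Lp_add_le_pair {p : ℝ} (hp : 1 ≤ p) (a₁ a₂ b₁ b₂ : ℝ≥0∞) :
    ((a₁ + a₂) ^ p + (b₁ + b₂) ^ p) ^ (1 / p) ≤
      (a₁ ^ p + b₁ ^ p) ^ (1 / p) + (a₂ ^ p + b₂ ^ p) ^ (1 / p) := by
  simpa [Fin.sum_univ_two] using
    ENNReal.Lp_add_le Finset.univ ![a₁, b₁] ![a₂, b₂] hp

section Energy

variable {Y : Type*} [MeasurableSpace Y] {m : Measure Y} {p : ℝ} {ρ : Y → Y → ℝ≥0∞} {S : Set Y}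
  {f g : Y → ℝ}

lemma npEnergyWith_posPart_le (hp : 0 ≤ p) :
    npEnergyWith m p ρ S (fun y => max (f y) 0) ≤ npEnergyWith m p ρ S f := by
  refine add_le_add (lintegral_mono fun y => ?_) ?_
  · refine ENNReal.rpow_le_rpow (ENNReal.ofReal_le_ofReal ?_) hp
    rw [abs_of_nonneg (le_max_right _ _)]
    exact max_le (le_abs_self _) (abs_nonneg _)
  · exact le_iInf₂ fun g hg =>
      iInf₂_le g ⟨hg.1, hg.2.comp_lipschitzWith (LipschitzWith.id.max_const 0)⟩

lemma npEnergyWith_const_mul_le {c : ℝ} (hc : 0 < c) (hp : 0 ≤ p) :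
    npEnergyWith m p ρ S (fun y => c * f y) ≤ ENNReal.ofReal c ^ p * npEnergyWith m p ρ S f := by
  have hcp : ENNReal.ofReal c ^ p ≠ ⊤ := ENNReal.rpow_ne_top_of_nonneg hp ENNReal.ofReal_ne_top
  have hcp₀ : ENNReal.ofReal c ^ p ≠ 0 := (ENNReal.rpow_pos (ENNReal.ofReal_pos.2 hc)
    ENNReal.ofReal_ne_top).ne'
  rw [npEnergyWith, npEnergyWith, mul_add, ← lintegral_const_mul' _ _ hcp]
  refine add_le_add (lintegral_mono fun y => le_of_eq ?_) ?_
  · rw [abs_mul, abs_of_pos hc, ENNReal.ofReal_mul hc.le, ENNReal.mul_rpow_of_nonneg _ _ hp]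
  · simp only [ENNReal.mul_iInf_of_ne hcp₀ hcp]
    refine le_iInf₂ fun g hg => (iInf₂_le (fun y => ENNReal.ofReal c * g y)
      ⟨hg.1.const_mul _, hg.2.const_mul hc.le⟩).trans_eq ?_
    simp only [ENNReal.mul_rpow_of_nonneg _ _ hp, lintegral_const_mul' _ _ hcp]

lemma npEnergyWith_add_rpow_le (hp : 1 ≤ p) (hf : Measurable f) (hg : Measurable g) :
    npEnergyWith m p ρ S (f + g) ^ (1 / p) ≤
      npEnergyWith m p ρ S f ^ (1 / p) + npEnergyWith m p ρ S g ^ (1 / p) := by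
  have hp₀ : 0 < p := by linarith
  have hrpow (x : ℝ≥0∞) : (x ^ (1 / p)) ^ p = x := by simp [hp₀.ne']
  let A (h : Y → ℝ) : ℝ≥0∞ := ∫⁻ y in S, ENNReal.ofReal |h y| ^ p ∂m
  let B (h : Y → ℝ) : ℝ≥0∞ := ⨅ G ∈ {G : Y → ℝ≥0∞ | Measurable G ∧
    IsUpperGradientWith ρ S G (fun y => (h y : EReal))}, ∫⁻ y in S, G y ^ p ∂m
  have hN (h : Y → ℝ) : npEnergyWith m p ρ S h = A h + B h := rfl
  have hA : A (f + g) ^ (1 / p) ≤ A f ^ (1 / p) + A g ^ (1 / p) := by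
    simp only [A]
    refine le_trans ?_ (ENNReal.lintegral_Lp_add_le
      (hf.abs.ennreal_ofReal.aemeasurable) (hg.abs.ennreal_ofReal.aemeasurable) hp)
    gcongr with y
    simp only [Pi.add_apply]
    rw [← ENNReal.ofReal_add (abs_nonneg _) (abs_nonneg _)]
    exact ENNReal.ofReal_le_ofReal (abs_add_le _ _)
  have hB : B (f + g) ^ (1 / p) ≤ B f ^ (1 / p) + B g ^ (1 / p) := by
    simp only [B, ← ENNReal.orderIsoRpow_apply (1 / p) (by positivity), OrderIso.map_iInf]
    refine ENNReal.le_iInf₂_add_iInf₂ fun G₁ hG₁ G₂ hG₂ => ?_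
    simp only [ENNReal.orderIsoRpow_apply]
    exact (iInf₂_le (G₁ + G₂) ⟨hG₁.1.add hG₂.1, hG₁.2.add hG₂.2⟩).trans
      (ENNReal.lintegral_Lp_add_le hG₁.1.aemeasurable hG₂.1.aemeasurable hp)
  calc npEnergyWith m p ρ S (f + g) ^ (1 / p)
      = ((A (f + g) ^ (1 / p)) ^ p + (B (f + g) ^ (1 / p)) ^ p) ^ (1 / p) := by
        rw [hN, hrpow, hrpow]
    _ ≤ ((A f ^ (1 / p) + A g ^ (1 / p)) ^ p + (B f ^ (1 / p) + B g ^ (1 / p)) ^ p) ^ (1 / p) := by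
        gcongr
    _ ≤ _ := Lp_add_le_pair hp _ _ _ _
    _ = _ := by rw [hrpow, hrpow, hrpow, hrpow, hN, hN]

end Energy

lemma exists_isOpen_superset_lt_of_continuousOn {X : Type*} [TopologicalSpace X]
    {Ω E U : Set X} {u : X → ℝ} {t : ℝ} (ht : t < 1) (hE : E ⊆ closure Ω)
    (hu1 : ∀ x ∈ E ∩ Ω, 1 ≤ u x)
    (hu2 : ∀ x ∈ E ∩ (closure Ω \ Ω), (1 : EReal) ≤ liminf (fun y => (u y : EReal)) (𝓝[Ω] x))
    (hU : IsOpen U) (hcont : ContinuousOn u (Ω \ U)) :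
    ∃ V, IsOpen V ∧ E ⊆ V ∧ ∀ y ∈ V ∩ (Ω \ U), t < u y := by
  refine ⟨interior {y | y ∈ Ω \ U → t < u y}, isOpen_interior, fun x hx => ?_,
    fun y hy => interior_subset hy.1 hy.2⟩
  rw [mem_interior_iff_mem_nhds]
  by_cases hxU : x ∈ U
  · exact mem_of_superset (hU.mem_nhds hxU) fun y hy hyU => absurd hy hyU.2
  suffices ∀ᶠ y in 𝓝[Ω \ U] x, t < u y from mem_nhdsWithin_iff_eventually.1 this
  by_cases hxΩ : x ∈ Ω
  · exact (hcont x ⟨hxΩ, hxU⟩).eventually (lt_mem_nhds ((ht.trans_le (hu1 x ⟨hx, hxΩ⟩))))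
  · have hlt : ((t : ℝ) : EReal) < liminf (fun y => (u y : EReal)) (𝓝[Ω] x) :=
      (EReal.coe_lt_coe_iff.2 ht).trans_le (hu2 x ⟨hx, hE hx, hxΩ⟩)
    exact nhdsWithin_mono x sdiff_subset
      ((eventually_lt_of_lt_liminf hlt).mono fun y hy => EReal.coe_lt_coe_iff.1 hy)

def bCpOnOuter {X : Type*} [PseudoEMetricSpace X] [MeasurableSpace X] (μ : Measure X) (p : ℝ)
    (Ω E : Set X) : ℝ≥0∞ :=
  ⨅ G ∈ {G : Set X | E ⊆ G ∧ ∃ V : Set X, IsOpen V ∧ G = V ∩ closure Ω}, bCpOn μ p Ω G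

section Capacity

variable {X : Type*} [PseudoEMetricSpace X] [MeasurableSpace X] {μ : Measure X} {p : ℝ}
  {Ω E G U V : Set X} {u w : X → ℝ}

lemma bCpOn_mono (h : E ⊆ G) : bCpOn μ p Ω E ≤ bCpOn μ p Ω G :=
  le_iInf₂ fun u hu => iInf₂_le u ⟨hu.1, fun x hx => hu.2.1 x ⟨h hx.1, hx.2⟩,
    fun x hx => hu.2.2 x ⟨h hx.1, hx.2⟩⟩

lemma bCpOn_le_bCpOnOuter : bCpOn μ p Ω E ≤ bCpOnOuter μ p Ω E :=
  le_iInf₂ fun _ hG => bCpOn_mono hG.1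

lemma bCpOn_inter_closure_le (hV : IsOpen V) (hw : Measurable w) (hw1 : ∀ y ∈ V ∩ Ω, 1 ≤ w y) :
    bCpOn μ p Ω (V ∩ closure Ω) ≤ npEnergyOn μ p Ω w := by
  rcases eq_or_ne (npEnergyOn μ p Ω w) ⊤ with htop | hfin
  · exact htop ▸ le_top
  refine iInf₂_le w ⟨⟨hw, hfin⟩, fun y hy => hw1 y ⟨hy.1.1, hy.2⟩, fun x hx => ?_⟩
  refine le_liminf_of_le (by isBoundedDefault) ?_
  filter_upwards [mem_nhdsWithin_of_mem_nhds (hV.mem_nhds hx.1.1), self_mem_nhdsWithin]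
    with y hyV hyΩ
  exact_mod_cast hw1 y ⟨hyV, hyΩ⟩

lemma ofReal_mul_bCpOnOuter_rpow_le (hp : 1 ≤ p) {t : ℝ} (ht₀ : 0 < t) (ht₁ : t < 1)
    {η : ℝ≥0∞} (hE : E ⊆ closure Ω) (hu : Measurable u) (hu1 : ∀ x ∈ E ∩ Ω, 1 ≤ u x)
    (hu2 : ∀ x ∈ E ∩ (closure Ω \ Ω), (1 : EReal) ≤ liminf (fun y => (u y : EReal)) (𝓝[Ω] x))
    (hU : IsOpen U) (hUcap : CpOn μ p Ω U < η ^ p) (hcont : ContinuousOn u (Ω \ U)) :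
    ENNReal.ofReal t * bCpOnOuter μ p Ω E ^ (1 / p) ≤ npEnergyOn μ p Ω u ^ (1 / p) + η := by
  have hp₀ : 0 < p := by linarith
  simp only [CpOn, iInf_lt_iff] at hUcap
  obtain ⟨v, ⟨⟨hv, -⟩, hvU⟩, hvη⟩ := hUcap
  obtain ⟨V, hV, hEV, hVu⟩ := exists_isOpen_superset_lt_of_continuousOn ht₁ hE hu1 hu2 hU hcont
  set f : X → ℝ := (fun y => max (u y) 0) + fun y => max (v y) 0
  have hf : Measurable f := (hu.max measurable_const).add (hv.max measurable_const)
  have hft : ∀ y ∈ (U ∪ V) ∩ Ω, t ≤ f y := by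
    rintro y ⟨hyUV, hyΩ⟩
    simp only [f, Pi.add_apply]
    by_cases hyU : y ∈ U
    · rw [hvU y hyU]
      linarith [le_max_right (u y) 0, le_max_left (1 : ℝ) 0]
    · linarith [hVu y ⟨hyUV.resolve_left hyU, hyΩ, hyU⟩, le_max_left (u y) 0, le_max_right (v y) 0]
  have hfN : npEnergyOn μ p Ω f ^ (1 / p) ≤ npEnergyOn μ p Ω u ^ (1 / p) + η := by
    refine (npEnergyWith_add_rpow_le hp (hu.max measurable_const) (hv.max measurable_const)).trans
      (add_le_add ?_ ?_)
    · exact ENNReal.rpow_le_rpow (npEnergyWith_posPart_le hp₀.le) (by positivity)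
    · calc _ ≤ npEnergyOn μ p Ω v ^ (1 / p) :=
            ENNReal.rpow_le_rpow (npEnergyWith_posPart_le hp₀.le) (by positivity)
        _ ≤ (η ^ p) ^ (1 / p) := ENNReal.rpow_le_rpow hvη.le (by positivity)
        _ = η := by simp [← ENNReal.rpow_mul, hp₀.ne']
  have hcap : bCpOnOuter μ p Ω E ≤ npEnergyOn μ p Ω (fun y => t⁻¹ * f y) :=
    (iInf₂_le _ ⟨subset_inter (hEV.trans subset_union_right) hE, U ∪ V, hU.union hV, rfl⟩).trans
      (bCpOn_inter_closure_le (hU.union hV) (hf.const_mul _) fun y hy => by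
        rw [← div_eq_inv_mul, one_le_div ht₀]; exact hft y hy)
  calc ENNReal.ofReal t * bCpOnOuter μ p Ω E ^ (1 / p)
      ≤ ENNReal.ofReal t * (ENNReal.ofReal t⁻¹ ^ p * npEnergyOn μ p Ω f) ^ (1 / p) := by
        gcongr
        exact hcap.trans (npEnergyWith_const_mul_le (inv_pos.2 ht₀) hp₀.le)
    _ = npEnergyOn μ p Ω f ^ (1 / p) := by
        rw [ENNReal.mul_rpow_of_nonneg _ _ (by positivity), ← ENNReal.rpow_mul,
          mul_one_div_cancel hp₀.ne', ENNReal.rpow_one, ← mul_assoc,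
          ← ENNReal.ofReal_mul ht₀.le, mul_inv_cancel₀ ht₀.ne', ENNReal.ofReal_one, one_mul]
    _ ≤ npEnergyOn μ p Ω u ^ (1 / p) + η := hfN

lemma bCpOnOuter_le_npEnergyOn (hp : 1 ≤ p) (hE : E ⊆ closure Ω) (hu : Measurable u)
    (hu1 : ∀ x ∈ E ∩ Ω, 1 ≤ u x)
    (hu2 : ∀ x ∈ E ∩ (closure Ω \ Ω), (1 : EReal) ≤ liminf (fun y => (u y : EReal)) (𝓝[Ω] x))
    (hqc : ∀ ε : ℝ≥0∞, 0 < ε → ∃ U : Set X, IsOpen U ∧ CpOn μ p Ω U < ε ∧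
      ContinuousOn u (Ω \ U)) :
    bCpOnOuter μ p Ω E ≤ npEnergyOn μ p Ω u := by
  rw [← ENNReal.rpow_le_rpow_iff (by positivity : 0 < 1 / p)]
  refine ENNReal.le_of_forall_lt_one_mul_le fun a ha => ?_
  rcases eq_or_ne a 0 with rfl | ha₀
  · simp
  refine ENNReal.le_of_forall_pos_le_add fun η hη _ => ?_
  obtain ⟨U, hU, hUcap, hcont⟩ :=
    hqc ((η : ℝ≥0∞) ^ p) (ENNReal.rpow_pos (by simpa using hη) ENNReal.coe_ne_top)
  have ha_top : a ≠ ⊤ := (ha.trans ENNReal.one_lt_top).ne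
  rw [← ENNReal.ofReal_toReal ha_top]
  refine ofReal_mul_bCpOnOuter_rpow_le hp (ENNReal.toReal_pos ha₀ ha_top) ?_ hE hu hu1 hu2 hU
    hUcap hcont
  simpa using (ENNReal.toReal_lt_toReal ha_top ENNReal.one_ne_top).2 ha

end Capacity

theorem statement6_general {X : Type*} [MetricSpace X] [MeasurableSpace X]
    (μ : Measure X) (Ω : Set X) (p : ℝ) (hp : 1 ≤ p)
    (hqc : ∀ u : X → ℝ, MemNp μ p Ω u → ∀ ε : ℝ≥0∞, 0 < ε →
      ∃ U : Set X, U ⊆ Ω ∧ IsOpen U ∧ CpOn μ p Ω U < ε ∧ ContinuousOn u (Ω \ U)) :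
    ∀ E : Set X, E ⊆ closure Ω →
      bCpOn μ p Ω E =
        ⨅ G ∈ {G : Set X | E ⊆ G ∧ ∃ V : Set X, IsOpen V ∧ G = V ∩ closure Ω},
          bCpOn μ p Ω G := by
  intro E hE
  refine le_antisymm bCpOn_le_bCpOnOuter (le_iInf₂ fun u hu => ?_)
  refine bCpOnOuter_le_npEnergyOn hp hE hu.1.1 hu.2.1 hu.2.2 fun ε hε => ?_
  obtain ⟨U, -, hU, hUcap, hcont⟩ := hqc u hu.1 ε hε
  exact ⟨U, hU, hUcap, hcont⟩

theorem statement6 {X : Type*} [MetricSpace X] [MeasurableSpace X] [BorelSpace X]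
    (μ : Measure X) (hμc : μ.IsComplete) (hball : BallRegular μ)
    (Ω : Set X) (hΩo : IsOpen Ω) (hΩne : Ω.Nonempty) (p : ℝ) (hp : 1 ≤ p)
    (hqc : ∀ u : X → ℝ, MemNp μ p Ω u → ∀ ε : ℝ≥0∞, 0 < ε →
      ∃ U : Set X, U ⊆ Ω ∧ IsOpen U ∧ CpOn μ p Ω U < ε ∧ ContinuousOn u (Ω \ U)) :
    ∀ E : Set X, E ⊆ closure Ω →
      bCpOn μ p Ω E =
        ⨅ G ∈ {G : Set X | E ⊆ G ∧ ∃ V : Set X, IsOpen V ∧ G = V ∩ closure Ω},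
          bCpOn μ p Ω G :=
  statement6_general μ Ω p hp hqc

end
end

section
/- Under the standing assumptions, if f ∈ N^{1,p}(clΩ; μ₀), then f∘Φ ∈ N^{1,p}(clΩ_M), and ‖f∘Φ‖_{N^{1,p}(clΩ_M)} = ‖f‖_{N^{1,p}(Ω)} = ‖f‖_{N^{1,p}(clΩ;μ₀)}. -/
/-!
The measure `μ|Ω` does not see `closure Ω \ Ω`, so only the upper gradients change between `Ω`
and `closure Ω`. An upper gradient `g` on `Ω` becomes one on `closure Ω` once an upper gradient
`g₀` on `closure Ω` is added on the `δ`-thickening of `closure Ω \ Ω` (cut each curve into pieces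
shorter than `δ`), and the correction disappears under dominated convergence as `δ → 0`.

On the Mazurkiewicz side, `Φ` and `ι` preserve the length of curves: for a connected `K`, the
distance in `Z` between two points of `K` is at most the diameter of `Φ '' K`, by chaining small
connected subsets of `Ω` near `Φ '' K`. Hence upper gradients pull back along `Φ` and push forward
along `ι`. As `ι` need not be measurable, the pushed-forward gradient is replaced by a measurable
majorant with no larger integral, obtained by applying `toMeasurable` to the level sets of a
series of simple functions.
-/

open Set MeasureTheory Filter ENNReal NNReal Metric Topology

noncomputable section

lemma erealAbs_coe_sub_coe (x y : ℝ) : erealAbs ((x : EReal) - y) = ENNReal.ofReal |x - y| := by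
  rw [← EReal.coe_sub, erealAbs, if_neg (by simp only [EReal.coe_ne_top, EReal.coe_ne_bot,
    or_self, not_false_eq_true]), EReal.toReal_coe]

lemma ediam_image_le_eVariationOn {α E : Type*} [LinearOrder α] [PseudoEMetricSpace E]
    (f : α → E) (s : Set α) : ediam (f '' s) ≤ eVariationOn f s := by
  refine ediam_le ?_
  rintro _ ⟨x, hx, rfl⟩ _ ⟨y, hy, rfl⟩
  exact eVariationOn.edist_le f hx hy

lemma eVariationOn_Icc_le_of_edist_le {E F : Type*} [PseudoEMetricSpace E]
    [PseudoEMetricSpace F] {f : ℝ → E} {g : ℝ → F} {s t : ℝ}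
    (h : ∀ u ∈ Icc s t, ∀ v ∈ Icc s t, u ≤ v → edist (f u) (f v) ≤ eVariationOn g (Icc u v)) :
    eVariationOn f (Icc s t) ≤ eVariationOn g (Icc s t) := by
  refine iSup_le ?_
  rintro ⟨n, u, hu, us⟩
  calc ∑ i ∈ Finset.range n, edist (f (u (i + 1))) (f (u i))
      ≤ ∑ i ∈ Finset.range n, eVariationOn g (Icc (u i) (u (i + 1))) :=
        Finset.sum_le_sum fun i _ => by
          rw [edist_comm]; exact h _ (us i) _ (us (i + 1)) (hu i.le_succ)
    _ = eVariationOn g (Icc (u 0) (u n)) := eVariationOn.sum' g hu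
    _ ≤ eVariationOn g (Icc s t) := eVariationOn.mono g (Icc_subset_Icc (us 0).1 (us n).2)

section ArcLength

variable {Y : Type*} [PseudoEMetricSpace Y] {γ : ℝ → Y} {L : ℝ}

lemma variationWith_edist_eq_eVariationOn (γ : ℝ → Y) {a b : ℝ} (hab : a ≤ b) :
    variationWith (fun x y => edist x y) γ a b = eVariationOn γ (Icc a b) := by
  apply le_antisymm
  · refine iSup₂_le ?_
    rintro P ⟨hmono, hmem, -, -⟩
    exact (Finset.sum_congr rfl fun i _ => edist_comm _ _).trans_le
      (eVariationOn.sum_le hmono hmem)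
  · refine iSup_le ?_
    rintro ⟨n, u, hu, us⟩
    -- pad the partition with the endpoints `a` and `b`
    set v : ℕ → ℝ := fun i => if i = 0 then a else if i ≤ n + 1 then u (i - 1) else b
    have hv : Monotone v := by
      intro i j hij
      simp only [v]
      split_ifs <;>
        first | omega | exact le_rfl | exact hab | exact (us _).1 | exact (us _).2 |
          exact hu (by omega)
    have hvmem : ∀ i, v i ∈ Icc a b := fun i => by
      simp only [v]; split_ifs
      exacts [⟨le_rfl, hab⟩, us _, ⟨hab, le_rfl⟩]
    refine le_trans ?_ (le_iSup₂_of_le (n + 2, v) ⟨hv, hvmem, rfl, by simp [v]⟩ le_rfl)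
    simp only
    rw [Finset.sum_range_succ, Finset.sum_range_succ']
    refine le_trans (le_of_eq ?_) (le_add_right (le_add_right le_rfl))
    refine Finset.sum_congr rfl fun i hi => ?_
    have hi : i < n := Finset.mem_range.mp hi
    simp only [v, if_neg (Nat.succ_ne_zero _), if_pos (show i + 1 ≤ n + 1 by omega),
      if_pos (show i + 1 + 1 ≤ n + 1 by omega), Nat.add_sub_cancel, edist_comm]

lemma isArcLengthParamWith_edist_iff :
    IsArcLengthParamWith (fun x y => edist x y) γ L ↔
      ∀ s t, s ∈ Icc 0 L → t ∈ Icc 0 L → s ≤ t →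
        eVariationOn γ (Icc s t) = ENNReal.ofReal (t - s) := by
  refine forall₂_congr fun s t => forall₃_congr fun _ _ hst => ?_
  rw [variationWith_edist_eq_eVariationOn γ hst]

lemma IsArcLengthParamWith.of_eVariationOn_eq {Y' : Type*} [PseudoEMetricSpace Y'] {γ' : ℝ → Y'}
    (hγ : IsArcLengthParamWith (fun x y => edist x y) γ L)
    (h : ∀ s t, s ∈ Icc 0 L → t ∈ Icc 0 L → s ≤ t →
      eVariationOn γ' (Icc s t) = eVariationOn γ (Icc s t)) :
    IsArcLengthParamWith (fun x y => edist x y) γ' L := by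
  rw [isArcLengthParamWith_edist_iff] at hγ ⊢
  exact fun s t hs ht hst => (h s t hs ht hst).trans (hγ s t hs ht hst)

lemma IsArcLengthParamWith.lipschitzOnWith (hγ : IsArcLengthParamWith (fun x y => edist x y) γ L) :
    LipschitzOnWith 1 γ (Icc 0 L) := by
  intro s hs t ht
  wlog hst : s ≤ t generalizing s t
  · rw [edist_comm, edist_comm s]; exact this ht hs (le_of_not_ge hst)
  rw [ENNReal.coe_one, one_mul, edist_comm s, edist_dist, Real.dist_eq,
    abs_of_nonneg (sub_nonneg.2 hst), ← isArcLengthParamWith_edist_iff.1 hγ s t hs ht hst]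
  exact eVariationOn.edist_le γ (left_mem_Icc.2 hst) (right_mem_Icc.2 hst)

lemma IsArcLengthParamWith.comp_const_add (hγ : IsArcLengthParamWith (fun x y => edist x y) γ L)
    {a b : ℝ} (ha : 0 ≤ a) (hb : b ≤ L) :
    IsArcLengthParamWith (fun x y => edist x y) (fun u => γ (a + u)) (b - a) := by
  rw [isArcLengthParamWith_edist_iff] at hγ ⊢
  intro s t hs ht hst
  have hmono : MonotoneOn (fun u : ℝ => a + u) (Icc s t) := fun _ _ _ _ h => by simpa using h
  rw [show (fun u => γ (a + u)) = γ ∘ fun u => a + u from rfl,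
    eVariationOn.comp_eq_of_monotoneOn γ _ hmono, image_const_add_Icc,
    hγ _ _ ⟨by linarith [hs.1], by linarith [hs.2]⟩ ⟨by linarith [ht.1], by linarith [ht.2]⟩
      (by linarith)]
  ring_nf

end ArcLength

lemma setLIntegral_Icc_add_Icc {G : ℝ → ℝ≥0∞} {a m b : ℝ} (ham : a ≤ m) (hmb : m ≤ b) :
    (∫⁻ t in Icc a m, G t) + ∫⁻ t in Icc m b, G t = ∫⁻ t in Icc a b, G t := by
  rw [← setLIntegral_congr (Ioc_ae_eq_Icc (a := m) (b := b)), ← lintegral_union measurableSet_Ioc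
    (disjoint_left.2 fun _ h₁ h₂ => h₂.1.not_ge h₁.2), Icc_union_Ioc_eq_Icc ham hmb]

lemma ofReal_abs_sub_le_setLIntegral_of_forall_le {u : ℝ → ℝ} {G : ℝ → ℝ≥0∞} {L δ : ℝ}
    (hL : 0 ≤ L) (hδ : 0 < δ)
    (h : ∀ a b, 0 ≤ a → a ≤ b → b ≤ L → b - a ≤ δ →
      ENNReal.ofReal |u b - u a| ≤ ∫⁻ t in Icc a b, G t) :
    ENNReal.ofReal |u L - u 0| ≤ ∫⁻ t in Icc 0 L, G t := by
  have hind : ∀ n : ℕ, ∀ a b, 0 ≤ a → a ≤ b → b ≤ L → b - a ≤ n * δ →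
      ENNReal.ofReal |u b - u a| ≤ ∫⁻ t in Icc a b, G t := by
    intro n
    induction n with
    | zero =>
      intro a b _ hab _ hba
      rw [show b = a by push_cast at hba; linarith, sub_self, abs_zero, ENNReal.ofReal_zero]
      exact zero_le
    | succ n ih =>
      intro a b ha hab hb hba
      by_cases hshort : b - a ≤ δ
      · exact h a b ha hab hb hshort
      push_cast at hba
      calc ENNReal.ofReal |u b - u a|
          ≤ ENNReal.ofReal (|u (b - δ) - u a| + |u b - u (b - δ)|) :=
            ENNReal.ofReal_le_ofReal ((abs_sub_le _ _ _).trans_eq (add_comm _ _))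
        _ ≤ ENNReal.ofReal |u (b - δ) - u a| + ENNReal.ofReal |u b - u (b - δ)| :=
            ENNReal.ofReal_add_le
        _ ≤ (∫⁻ t in Icc a (b - δ), G t) + ∫⁻ t in Icc (b - δ) b, G t :=
            add_le_add (ih a (b - δ) ha (by linarith) (by linarith) (by linarith))
              (h (b - δ) b (by linarith) (by linarith) hb (by linarith))
        _ = ∫⁻ t in Icc a b, G t := setLIntegral_Icc_add_Icc (by linarith) (by linarith)
  obtain ⟨n, hn⟩ := exists_nat_ge (L / δ)
  exact hind n 0 L le_rfl hL le_rfl (by rw [sub_zero]; exact (div_le_iff₀ hδ).1 hn)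

section UpperGradient

variable {Y : Type*} [PseudoEMetricSpace Y] {S T : Set Y} {g : Y → ℝ≥0∞} {F : Y → EReal}
  {γ : ℝ → Y} {L : ℝ}

lemma IsUpperGradientOn.mono (hg : IsUpperGradientOn T g F) (hST : S ⊆ T) :
    IsUpperGradientOn S g F :=
  fun γ L hL hmap hγ => hg γ L hL (hmap.mono_right hST) hγ

lemma IsUpperGradientOn.le_setLIntegral_Icc (hg : IsUpperGradientOn S g F)
    (hγ : IsArcLengthParamWith (fun x y => edist x y) γ L) {a b : ℝ} (ha : 0 ≤ a) (hab : a < b)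
    (hb : b ≤ L) (hmap : MapsTo γ (Icc a b) S) :
    erealAbs (F (γ b) - F (γ a)) ≤ ∫⁻ t in Icc a b, g (γ t) := by
  have key := hg (fun u => γ (a + u)) (b - a) (sub_pos.2 hab)
    (fun u hu => hmap ⟨by linarith [hu.1], by linarith [hu.2]⟩) (hγ.comp_const_add ha hb)
  simp only [add_zero, add_sub_cancel] at key
  refine key.trans_eq ?_
  have := (measurePreserving_add_left volume a).setLIntegral_comp_preimage_emb
    (measurableEmbedding_addLeft a) (fun t => g (γ t)) (Icc a b)
  rwa [preimage_const_add_Icc, sub_self] at this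

end UpperGradient

section Closure

variable {X : Type*} [PseudoMetricSpace X] {Ω T : Set X} {f : X → ℝ} {g g₀ : X → ℝ≥0∞}

/-- Split a curve in `T` into pieces of length at most `δ / 2`: a piece meeting `T \ Ω` lies in the
`δ`-thickening of `T \ Ω`, where `g₀` is available, and any other piece lies in `Ω`. -/
lemma IsUpperGradientOn.add_indicator_thickening
    (hg : IsUpperGradientOn Ω g (fun x => (f x : EReal)))
    (hg₀ : IsUpperGradientOn T g₀ (fun x => (f x : EReal))) {δ : ℝ} (hδ : 0 < δ) :
    IsUpperGradientOn T (g + (thickening δ (T \ Ω)).indicator g₀) (fun x => (f x : EReal)) := by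
  intro γ L hL hmap hγ
  rw [erealAbs_coe_sub_coe]
  refine ofReal_abs_sub_le_setLIntegral_of_forall_le (u := fun t => f (γ t))
    (G := fun t => (g + (thickening δ (T \ Ω)).indicator g₀) (γ t)) hL.le (half_pos hδ)
    fun a b ha hab hb hba => ?_
  rcases hab.eq_or_lt with rfl | hab
  · simp
  rw [← erealAbs_coe_sub_coe]
  have hsub : Icc a b ⊆ Icc 0 L := Icc_subset_Icc ha hb
  by_cases hmeet : ∃ τ ∈ Icc a b, γ τ ∈ T \ Ω
  · obtain ⟨τ, hτ, hτT⟩ := hmeet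
    refine (hg₀.le_setLIntegral_Icc hγ ha hab hb (hmap.mono_left hsub)).trans
      (setLIntegral_mono' measurableSet_Icc fun t ht => ?_)
    have hthick : γ t ∈ thickening δ (T \ Ω) := by
      refine mem_thickening_iff.2 ⟨γ τ, hτT, ?_⟩
      calc dist (γ t) (γ τ) ≤ 1 * dist t τ := hγ.lipschitzOnWith.dist_le_mul _ (hsub ht) _ (hsub hτ)
        _ ≤ b - a := by rw [one_mul]; exact Real.dist_le_of_mem_Icc ht hτ
        _ < δ := by linarith
    rw [Pi.add_apply, indicator_of_mem hthick]
    exact le_add_self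
  · push Not at hmeet
    have hmapΩ : MapsTo γ (Icc a b) Ω := fun t ht => by
      by_contra hΩ
      exact hmeet t ht ⟨hmap (hsub ht), hΩ⟩
    exact (hg.le_setLIntegral_Icc hγ ha hab hb hmapΩ).trans
      (setLIntegral_mono' measurableSet_Icc fun t _ => le_self_add)

variable [MeasurableSpace X] [OpensMeasurableSpace X]

lemma tendsto_setLIntegral_add_indicator_thickening (μ : Measure X) (hΩ : MeasurableSet Ω)
    {F : Set X} (hF : IsClosed F) (hΩF : Disjoint Ω F) (hg : Measurable g) (hg₀ : Measurable g₀)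
    {p : ℝ} (hp : 1 ≤ p) (hgfin : ∫⁻ x in Ω, g x ^ p ∂μ ≠ ⊤)
    (hg₀fin : ∫⁻ x in Ω, g₀ x ^ p ∂μ ≠ ⊤) :
    Tendsto (fun δ => ∫⁻ x in Ω, (g + (thickening δ F).indicator g₀) x ^ p ∂μ) (𝓝[>] 0)
      (𝓝 (∫⁻ x in Ω, g x ^ p ∂μ)) := by
  refine tendsto_lintegral_filter_of_dominated_convergence
    (fun x => 2 ^ (p - 1) * (g x ^ p + g₀ x ^ p))
    (Eventually.of_forall fun δ =>
      (hg.add (hg₀.indicator isOpen_thickening.measurableSet)).pow_const p)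
    (Eventually.of_forall fun δ => Eventually.of_forall fun x => ?_) ?_ ?_
  · refine (ENNReal.rpow_le_rpow (add_le_add le_rfl (indicator_le_self _ _ x)) (by linarith)).trans
      (ENNReal.rpow_add_le_mul_rpow_add_rpow _ _ hp)
  · have h2 : (2 : ℝ≥0∞) ^ (p - 1) ≠ ⊤ :=
      ENNReal.rpow_ne_top_of_nonneg (by linarith) ENNReal.ofNat_ne_top
    rw [lintegral_const_mul' _ _ h2, lintegral_add_left (hg.pow_const p)]
    exact ENNReal.mul_ne_top h2 (ENNReal.add_ne_top.2 ⟨hgfin, hg₀fin⟩)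
  · filter_upwards [ae_restrict_mem hΩ] with x hx
    have hpos : 0 < infEDist x F := by
      rw [infEDist_pos_iff_notMem_closure, hF.closure_eq]
      exact hΩF.notMem_of_mem_left hx
    have hofReal : Tendsto ENNReal.ofReal (𝓝[>] 0) (𝓝 0) :=
      (ENNReal.continuous_ofReal.tendsto' 0 0 ENNReal.ofReal_zero).mono_left nhdsWithin_le_nhds
    refine tendsto_const_nhds.congr' ?_
    filter_upwards [hofReal.eventually_lt_const hpos] with δ hδ
    rw [Pi.add_apply, indicator_of_notMem
      (fun h => (mem_thickening_iff_infEDist_lt.1 h).not_ge hδ.le), add_zero]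

end Closure

section Energy

variable {Y : Type*} [PseudoEMetricSpace Y] [MeasurableSpace Y] {m : Measure Y} {p : ℝ}
  {S : Set Y} {f : Y → ℝ} {g : Y → ℝ≥0∞}

def upperGradientEnergy (m : Measure Y) (p : ℝ) (S : Set Y) (f : Y → ℝ) : ℝ≥0∞ :=
  ⨅ g ∈ {g : Y → ℝ≥0∞ | Measurable g ∧ IsUpperGradientOn S g (fun y => (f y : EReal))},
    ∫⁻ y in S, g y ^ p ∂m

lemma npEnergyOn_eq_add :
    npEnergyOn m p S f = (∫⁻ y in S, ENNReal.ofReal |f y| ^ p ∂m) + upperGradientEnergy m p S f :=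
  rfl

lemma upperGradientEnergy_le (hgm : Measurable g)
    (hg : IsUpperGradientOn S g (fun y => (f y : EReal))) :
    upperGradientEnergy m p S f ≤ ∫⁻ y in S, g y ^ p ∂m :=
  iInf₂_le g ⟨hgm, hg⟩

lemma exists_upperGradient_of_upperGradientEnergy_ne_top (h : upperGradientEnergy m p S f ≠ ⊤) :
    ∃ g, Measurable g ∧ IsUpperGradientOn S g (fun y => (f y : EReal)) ∧
      ∫⁻ y in S, g y ^ p ∂m ≠ ⊤ := by
  obtain ⟨g, hlt⟩ := iInf_lt_iff.1 (lt_top_iff_ne_top.2 h)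
  obtain ⟨⟨hgm, hg⟩, hlt⟩ := iInf_lt_iff.1 hlt
  exact ⟨g, hgm, hg, hlt.ne⟩

end Energy

lemma setLIntegral_restrict_of_subset {X : Type*} [MeasurableSpace X] (μ : Measure X)
    {Ω T : Set X} (hΩ : MeasurableSet Ω) (hΩT : Ω ⊆ T) (h : X → ℝ≥0∞) :
    ∫⁻ x in T, h x ∂(μ.restrict Ω) = ∫⁻ x in Ω, h x ∂μ := by
  rw [Measure.restrict_restrict' hΩ, inter_eq_right.2 hΩT]

theorem upperGradientEnergy_restrict_closure {X : Type*} [PseudoMetricSpace X] [MeasurableSpace X]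
    [OpensMeasurableSpace X] (μ : Measure X) {Ω : Set X} (hΩ : IsOpen Ω) {p : ℝ} (hp : 1 ≤ p)
    {f : X → ℝ} (hfin : upperGradientEnergy (μ.restrict Ω) p (closure Ω) f ≠ ⊤) :
    upperGradientEnergy (μ.restrict Ω) p (closure Ω) f = upperGradientEnergy μ p Ω f := by
  have hint := setLIntegral_restrict_of_subset μ hΩ.measurableSet subset_closure
  obtain ⟨g₀, hg₀m, hg₀, hg₀fin⟩ := exists_upperGradient_of_upperGradientEnergy_ne_top hfin
  rw [hint] at hg₀fin
  refine le_antisymm (le_iInf₂ fun g ⟨hgm, hg⟩ => ?_) (le_iInf₂ fun g ⟨hgm, hg⟩ => ?_)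
  · by_cases hgfin : ∫⁻ x in Ω, g x ^ p ∂μ = ⊤
    · rw [hgfin]; exact le_top
    refine ge_of_tendsto (tendsto_setLIntegral_add_indicator_thickening μ hΩ.measurableSet
      ((isClosed_closure (s := Ω)).sdiff hΩ) disjoint_sdiff_right hgm hg₀m hp hgfin hg₀fin) ?_
    filter_upwards [self_mem_nhdsWithin] with δ hδ
    rw [← hint]
    exact upperGradientEnergy_le (hgm.add (hg₀m.indicator isOpen_thickening.measurableSet))
      (hg.add_indicator_thickening hg₀ hδ)
  · rw [hint]
    exact upperGradientEnergy_le hgm (hg.mono subset_closure)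

section Mazurkiewicz

variable {X Z : Type*} [PseudoEMetricSpace X] [PseudoEMetricSpace Z] {Ω : Set X} {ι : Ω → Z}
  {Φ : Z → X}

lemma mazDist_le_ediam {E : Set X} (hEΩ : E ⊆ Ω) (hE : IsConnected E) {x y : X} (hx : x ∈ E)
    (hy : y ∈ E) : mazDist Ω x y ≤ ediam E :=
  iInf₂_le E ⟨hEΩ, hE, hx, hy⟩

lemma exists_isConnected_of_mazDist_lt {x y : X} {r : ℝ≥0∞} (h : mazDist Ω x y < r) :
    ∃ E ⊆ Ω, IsConnected E ∧ x ∈ E ∧ y ∈ E ∧ ediam E < r := by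
  obtain ⟨E, hlt⟩ := iInf_lt_iff.1 h
  obtain ⟨⟨hEΩ, hE, hx, hy⟩, hlt⟩ := iInf_lt_iff.1 hlt
  exact ⟨E, hEΩ, hE, hx, hy, hlt⟩

/-- Two points of `Z` are related when they are `δ`-close to `ι x` and `ι x'` with `x, x'` joined by
a connected subset of `Ω` within `3δ` of `Φ '' K`. The relation holds locally by density of `ι`, and
it is transitive because `ι` is an isometry for the Mazurkiewicz distance. -/
lemma edist_le_ediam_image_of_isPreconnected
    (hι : ∀ x y : Ω, edist (ι x) (ι y) = mazDist Ω x y) (hdense : DenseRange ι)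
    (hΦ : LipschitzWith 1 Φ) (hΦι : ∀ x : Ω, Φ (ι x) = x) {K : Set Z} (hK : IsPreconnected K)
    {z z' : Z} (hz : z ∈ K) (hz' : z' ∈ K) : edist z z' ≤ ediam (Φ '' K) := by
  refine ENNReal.le_of_forall_pos_le_add fun ε hε _ => ?_
  obtain ⟨δ, hδ, rfl⟩ : ∃ δ : ℝ≥0, 0 < δ ∧ ε = 8 * δ :=
    ⟨ε / 8, by positivity, (mul_div_cancel₀ ε (by norm_num)).symm⟩
  have hΦι' : ∀ (x : Ω) (w : Z), edist (x : X) (Φ w) ≤ edist (ι x) w := fun x w => by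
    simpa [hΦι] using hΦ (ι x) w
  set P : Z → Z → Prop := fun z₁ z₂ => ∃ x x' : Ω, edist z₁ (ι x) < δ ∧ edist z₂ (ι x') < δ ∧
    ∃ E ⊆ Ω, IsConnected E ∧ (x : X) ∈ E ∧ (x' : X) ∈ E ∧
      ∀ e ∈ E, infEDist e (Φ '' K) ≤ 3 * δ
  have hδ₀ : (δ : ℝ≥0∞) ≠ 0 := ENNReal.coe_ne_zero.2 hδ.ne'
  have hlocal : ∀ z₁ ∈ K, ∀ᶠ z₂ in 𝓝[K] z₁, P z₁ z₂ := by
    intro z₁ hz₁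
    obtain ⟨_, ⟨x, rfl⟩, hx⟩ :=
      EMetric.mem_closure_iff.1 (hdense z₁) _ (ENNReal.half_pos hδ₀)
    filter_upwards [nhdsWithin_le_nhds (Metric.eball_mem_nhds z₁ (ENNReal.half_pos hδ₀))]
      with z₂ hz₂
    have hx₁ : edist z₁ (ι x) < δ := hx.trans (ENNReal.half_lt_self hδ₀ ENNReal.coe_ne_top)
    refine ⟨x, x, hx₁, ?_, {(x : X)}, singleton_subset_iff.2 x.2, isConnected_singleton, rfl, rfl,
      fun e he => ?_⟩
    · calc edist z₂ (ι x) ≤ edist z₂ z₁ + edist z₁ (ι x) := edist_triangle _ _ _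
        _ < δ / 2 + δ / 2 := ENNReal.add_lt_add (Metric.mem_eball.1 hz₂) hx
        _ = δ := ENNReal.add_halves _
    · rw [mem_singleton_iff.1 he]
      calc infEDist (x : X) (Φ '' K) ≤ edist (x : X) (Φ z₁) :=
            infEDist_le_edist_of_mem ⟨z₁, hz₁, rfl⟩
        _ ≤ edist (ι x) z₁ := hΦι' x z₁
        _ ≤ 3 * δ := by rw [edist_comm]; exact hx₁.le.trans (le_mul_of_one_le_left' (by norm_num))
  have htrans : ∀ z₁ z₂ z₃, z₁ ∈ K → z₂ ∈ K → z₃ ∈ K → P z₁ z₂ → P z₂ z₃ → P z₁ z₃ := by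
    rintro z₁ z₂ z₃ - hz₂ - ⟨x₁, x₂, h₁, h₂, E₁, hE₁Ω, hE₁, hx₁, hx₂, hE₁K⟩
      ⟨y₂, y₃, h₂', h₃, E₂, hE₂Ω, hE₂, hy₂, hy₃, hE₂K⟩
    have hmaz : mazDist Ω x₂ y₂ < 2 * δ := by
      rw [← hι, two_mul]
      calc edist (ι x₂) (ι y₂) ≤ edist (ι x₂) z₂ + edist z₂ (ι y₂) := edist_triangle _ _ _
        _ < δ + δ := ENNReal.add_lt_add (by rwa [edist_comm]) h₂'
    obtain ⟨E, hEΩ, hE, hx₂E, hy₂E, hEdiam⟩ := exists_isConnected_of_mazDist_lt hmaz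
    refine ⟨x₁, y₃, h₁, h₃, E₁ ∪ E ∪ E₂, union_subset (union_subset hE₁Ω hEΩ) hE₂Ω,
      (hE₁.union ⟨(x₂ : X), hx₂, hx₂E⟩ hE).union ⟨(y₂ : X), Or.inr hy₂E, hy₂⟩ hE₂,
      Or.inl (Or.inl hx₁), Or.inr hy₃, ?_⟩
    rintro e ((he | he) | he)
    exacts [hE₁K e he, calc
      infEDist e (Φ '' K) ≤ infEDist (x₂ : X) (Φ '' K) + edist e x₂ :=
          infEDist_le_infEDist_add_edist
      _ ≤ edist (x₂ : X) (Φ z₂) + ediam E :=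
          add_le_add (infEDist_le_edist_of_mem ⟨z₂, hz₂, rfl⟩)
            (edist_le_ediam_of_mem he hx₂E)
      _ ≤ δ + 2 * δ := add_le_add ((hΦι' x₂ z₂).trans (by rw [edist_comm]; exact h₂.le)) hEdiam.le
      _ = 3 * δ := by ring, hE₂K e he]
  obtain ⟨x, x', hx, hx', E, hEΩ, hE, hxE, hx'E, hEK⟩ := hK.induction₂ P hlocal htrans
    (fun z₁ z₂ _ _ ⟨x, x', h, h', E, hEΩ, hE, hxE, hx'E, hEK⟩ =>
      ⟨x', x, h', h, E, hEΩ, hE, hx'E, hxE, hEK⟩) hz hz'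
  have hEthick : E ⊆ cthickening ((3 * δ : ℝ≥0) : ℝ) (Φ '' K) := fun e he => by
    rw [mem_cthickening_iff, ENNReal.ofReal_coe_nnreal, ENNReal.coe_mul]
    exact hEK e he
  calc edist z z' ≤ edist z (ι x) + edist (ι x) (ι x') + edist (ι x') z' := edist_triangle4 _ _ _ _
    _ ≤ δ + ediam E + δ := by
        rw [hι, edist_comm (ι x')]
        exact add_le_add (add_le_add hx.le (mazDist_le_ediam hEΩ hE hxE hx'E)) hx'.le
    _ ≤ δ + (ediam (Φ '' K) + 2 * (3 * δ : ℝ≥0)) + δ := by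
        gcongr
        exact (ediam_mono hEthick).trans (ediam_cthickening_le _)
    _ = ediam (Φ '' K) + (8 * δ : ℝ≥0) := by push_cast; ring

end Mazurkiewicz

section Curves

variable {X Z : Type*} [PseudoEMetricSpace X] [PseudoEMetricSpace Z] {Ω : Set X} {ι : Ω → Z}
  {Φ : Z → X} {L : ℝ}

lemma IsArcLengthParamWith.comp_mazurkiewiczProj
    (hι : ∀ x y : Ω, edist (ι x) (ι y) = mazDist Ω x y) (hdense : DenseRange ι)
    (hΦ : LipschitzWith 1 Φ) (hΦι : ∀ x : Ω, Φ (ι x) = x) {γ : ℝ → Z}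
    (hγ : IsArcLengthParamWith (fun x y => edist x y) γ L) :
    IsArcLengthParamWith (fun x y => edist x y) (Φ ∘ γ) L := by
  refine hγ.of_eVariationOn_eq fun s t hs ht _ => le_antisymm ?_ ?_
  · simpa using (hΦ.lipschitzOnWith (s := univ)).comp_eVariationOn_le (mapsTo_univ γ (Icc s t))
  refine eVariationOn_Icc_le_of_edist_le fun u hu v hv huv => ?_
  have hcont : ContinuousOn γ (Icc u v) := hγ.lipschitzOnWith.continuousOn.mono
    (Icc_subset_Icc (hs.1.trans hu.1) (hv.2.trans ht.2))
  calc edist (γ u) (γ v) ≤ ediam (Φ '' (γ '' Icc u v)) :=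
        edist_le_ediam_image_of_isPreconnected hι hdense hΦ hΦι (isPreconnected_Icc.image γ hcont)
          (mem_image_of_mem γ (left_mem_Icc.2 huv)) (mem_image_of_mem γ (right_mem_Icc.2 huv))
    _ = ediam ((Φ ∘ γ) '' Icc u v) := by rw [image_comp]
    _ ≤ eVariationOn (Φ ∘ γ) (Icc u v) := ediam_image_le_eVariationOn _ _

lemma IsArcLengthParamWith.comp_mazurkiewiczIncl
    (hι : ∀ x y : Ω, edist (ι x) (ι y) = mazDist Ω x y) (hΦ : LipschitzWith 1 Φ)
    (hΦι : ∀ x : Ω, Φ (ι x) = x) {θ : X → Z} (hθ : ∀ x : Ω, θ x = ι x) {γ : ℝ → X}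
    (hγ : IsArcLengthParamWith (fun x y => edist x y) γ L) (hmap : MapsTo γ (Icc 0 L) Ω) :
    IsArcLengthParamWith (fun x y => edist x y) (θ ∘ γ) L := by
  refine hγ.of_eVariationOn_eq fun s t hs ht _ => le_antisymm ?_ ?_
  · refine eVariationOn_Icc_le_of_edist_le fun u hu v hv huv => ?_
    have hsub : Icc u v ⊆ Icc 0 L := Icc_subset_Icc (hs.1.trans hu.1) (hv.2.trans ht.2)
    have hconn : IsConnected (γ '' Icc u v) := (isConnected_Icc huv).image γ
      (hγ.lipschitzOnWith.continuousOn.mono hsub)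
    calc edist (θ (γ u)) (θ (γ v)) = mazDist Ω (γ u) (γ v) := by
          rw [hθ ⟨_, hmap (hsub (left_mem_Icc.2 huv))⟩, hθ ⟨_, hmap (hsub (right_mem_Icc.2 huv))⟩,
            hι]
      _ ≤ ediam (γ '' Icc u v) := mazDist_le_ediam (hmap.mono_left hsub).image_subset hconn
          (mem_image_of_mem γ (left_mem_Icc.2 huv)) (mem_image_of_mem γ (right_mem_Icc.2 huv))
      _ ≤ eVariationOn γ (Icc u v) := ediam_image_le_eVariationOn _ _
  · calc eVariationOn γ (Icc s t) = eVariationOn (Φ ∘ θ ∘ γ) (Icc s t) :=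
          eVariationOn.eq_of_eqOn fun r hr => by
            simp [hθ ⟨_, hmap (Icc_subset_Icc hs.1 ht.2 hr)⟩, hΦι]
      _ ≤ eVariationOn (θ ∘ γ) (Icc s t) := by
          simpa using (hΦ.lipschitzOnWith (s := univ)).comp_eVariationOn_le
            (mapsTo_univ (θ ∘ γ) (Icc s t))

lemma map_mem_closure_of_denseRange (hdense : DenseRange ι) (hΦ : Continuous Φ)
    (hΦι : ∀ x : Ω, Φ (ι x) = x) (z : Z) : Φ z ∈ closure Ω := by
  have := hΦ.range_subset_closure_image_dense hdense ⟨z, rfl⟩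
  rwa [← range_comp, show Φ ∘ ι = Subtype.val from funext hΦι, Subtype.range_coe] at this

variable {F : X → EReal}

lemma IsUpperGradientOn.comp_mazurkiewiczProj
    (hι : ∀ x y : Ω, edist (ι x) (ι y) = mazDist Ω x y) (hdense : DenseRange ι)
    (hΦ : LipschitzWith 1 Φ) (hΦι : ∀ x : Ω, Φ (ι x) = x) {g : X → ℝ≥0∞}
    (hg : IsUpperGradientOn (closure Ω) g F) : IsUpperGradientOn univ (g ∘ Φ) (F ∘ Φ) :=
  fun γ L hL _ hγ => hg (Φ ∘ γ) L hL
    (fun t _ => map_mem_closure_of_denseRange hdense hΦ.continuous hΦι (γ t))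
    (hγ.comp_mazurkiewiczProj hι hdense hΦ hΦι)

lemma IsUpperGradientOn.of_comp_mazurkiewiczIncl
    (hι : ∀ x y : Ω, edist (ι x) (ι y) = mazDist Ω x y) (hΦ : LipschitzWith 1 Φ)
    (hΦι : ∀ x : Ω, Φ (ι x) = x) {θ : X → Z} (hθ : ∀ x : Ω, θ x = ι x) {g : Z → ℝ≥0∞}
    (hg : IsUpperGradientOn univ g (F ∘ Φ)) {ψ : X → ℝ≥0∞} (hψ : ∀ x ∈ Ω, g (θ x) ≤ ψ x) :
    IsUpperGradientOn Ω ψ F := by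
  intro γ L hL hmap hγ
  have hΦθ : ∀ t ∈ Icc 0 L, Φ (θ (γ t)) = γ t := fun t ht => by
    rw [hθ ⟨_, hmap ht⟩, hΦι]
  have key := hg (θ ∘ γ) L hL (mapsTo_univ _ _) (hγ.comp_mazurkiewiczIncl hι hΦ hΦι hθ hmap)
  simp only [Function.comp_apply, hΦθ L ⟨hL.le, le_rfl⟩, hΦθ 0 ⟨le_rfl, hL.le⟩] at key
  exact key.trans (setLIntegral_mono' measurableSet_Icc fun t ht => hψ _ (hmap ht))

end Curves

section Envelope

variable {W V : Type*} [MeasurableSpace W] [MeasurableSpace V] {m : Measure W} {ν : Measure V}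
  {θ : W → V}

lemma MeasureTheory.SimpleFunc.exists_measurable_ge_comp_lintegral_le
    (hθ : ∀ A, MeasurableSet A → m (θ ⁻¹' A) ≤ ν A) (s : SimpleFunc V ℝ≥0) :
    ∃ χ : W → ℝ≥0∞, Measurable χ ∧ (∀ w, (s (θ w) : ℝ≥0∞) ≤ χ w) ∧
      ∫⁻ w, χ w ∂m ≤ ∫⁻ v, s v ∂ν := by
  set T : ℝ≥0 → Set W := fun c => toMeasurable m (θ ⁻¹' (s ⁻¹' {c}))
  have hT : ∀ c, MeasurableSet (T c) := fun c => measurableSet_toMeasurable _ _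
  refine ⟨fun w => ∑ c ∈ s.range, (T c).indicator (fun _ => (c : ℝ≥0∞)) w,
    Finset.measurable_sum _ fun c _ => measurable_const.indicator (hT c), fun w => ?_, ?_⟩
  · refine le_trans (le_of_eq ?_)
      (Finset.single_le_sum (fun c _ => zero_le) (s.mem_range_self (θ w)))
    have hw : w ∈ T (s (θ w)) := subset_toMeasurable _ _ (mem_preimage.2 rfl)
    rw [indicator_of_mem hw]
  · rw [MeasureTheory.lintegral_finsetSum _ fun c _ => measurable_const.indicator (hT c)]
    calc ∑ c ∈ s.range, ∫⁻ w, (T c).indicator (fun _ => (c : ℝ≥0∞)) w ∂m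
        = ∑ c ∈ s.range, (c : ℝ≥0∞) * m (θ ⁻¹' (s ⁻¹' {c})) := by
          simp_rw [lintegral_indicator_const (hT _), T, measure_toMeasurable]
      _ ≤ ∑ c ∈ s.range, (c : ℝ≥0∞) * ν (s ⁻¹' {c}) :=
          Finset.sum_le_sum fun c _ => by gcongr; exact hθ _ (s.measurableSet_preimage _)
      _ = ∫⁻ v, s v ∂ν := by
          rw [← SimpleFunc.map_lintegral, ← SimpleFunc.lintegral_eq_lintegral]
          rfl

lemma exists_measurable_ge_comp_lintegral_le (hθ : ∀ A, MeasurableSet A → m (θ ⁻¹' A) ≤ ν A)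
    {h : V → ℝ≥0∞} (hh : Measurable h) :
    ∃ χ : W → ℝ≥0∞, Measurable χ ∧ (∀ w, h (θ w) ≤ χ w) ∧ ∫⁻ w, χ w ∂m ≤ ∫⁻ v, h v ∂ν := by
  choose χ hχm hχ hχint using fun n =>
    (SimpleFunc.eapproxDiff h n).exists_measurable_ge_comp_lintegral_le hθ
  refine ⟨fun w => ∑' n, χ n w, Measurable.tsum hχm, fun w => ?_, ?_⟩
  · rw [← SimpleFunc.tsum_eapproxDiff h hh]
    exact ENNReal.tsum_le_tsum fun n => hχ n w
  · calc ∫⁻ w, ∑' n, χ n w ∂m = ∑' n, ∫⁻ w, χ n w ∂m :=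
          lintegral_tsum fun n => (hχm n).aemeasurable
      _ ≤ ∑' n, ∫⁻ v, SimpleFunc.eapproxDiff h n v ∂ν := ENNReal.tsum_le_tsum hχint
      _ = ∫⁻ v, ∑' n, (SimpleFunc.eapproxDiff h n v : ℝ≥0∞) ∂ν :=
          (lintegral_tsum fun n => (SimpleFunc.measurable _).coe_nnreal_ennreal.aemeasurable).symm
      _ = ∫⁻ v, h v ∂ν := by simp_rw [SimpleFunc.tsum_eapproxDiff h hh]

end Envelope

lemma map_eq_restrict_of_forall_apply_eq {X Z : Type*} [MeasurableSpace X] [MeasurableSpace Z]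
    {μ : Measure X} {ν : Measure Z} {Ω : Set X} {ι : Ω → Z} {Φ : Z → X}
    (hν : ∀ A : Set Z, MeasurableSet A → ν A = μ (Subtype.val '' (ι ⁻¹' A)))
    (hΦι : ∀ x : Ω, Φ (ι x) = x) (hΦm : Measurable Φ) : ν.map Φ = μ.restrict Ω := by
  ext A hA
  rw [Measure.map_apply hΦm hA, hν _ (hΦm hA), Measure.restrict_apply hA]
  congr 1
  ext x
  constructor
  · rintro ⟨y, hy, rfl⟩
    exact ⟨by simpa [hΦι] using hy, y.2⟩
  · rintro ⟨hxA, hxΩ⟩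
    exact ⟨⟨x, hxΩ⟩, by simpa [hΦι] using hxA, rfl⟩

section EnergyComparison

variable {X Z : Type*} [PseudoEMetricSpace X] [MeasurableSpace X] [PseudoEMetricSpace Z]
  [MeasurableSpace Z] {μ : Measure X} {ν : Measure Z} {Ω : Set X} {ι : Ω → Z} {Φ : Z → X}
  {p : ℝ} {f : X → ℝ}

theorem upperGradientEnergy_comp_le_restrict_closure (hΩ : MeasurableSet Ω)
    (hι : ∀ x y : Ω, edist (ι x) (ι y) = mazDist Ω x y) (hdense : DenseRange ι)
    (hΦ : LipschitzWith 1 Φ) (hΦι : ∀ x : Ω, Φ (ι x) = x) (hΦm : Measurable Φ)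
    (hmap : ν.map Φ = μ.restrict Ω) :
    upperGradientEnergy ν p univ (f ∘ Φ) ≤ upperGradientEnergy (μ.restrict Ω) p (closure Ω) f := by
  refine le_iInf₂ fun g ⟨hgm, hg⟩ => ?_
  calc upperGradientEnergy ν p univ (f ∘ Φ) ≤ ∫⁻ z in univ, (g ∘ Φ) z ^ p ∂ν :=
        upperGradientEnergy_le (hgm.comp hΦm) (hg.comp_mazurkiewiczProj hι hdense hΦ hΦι)
    _ = ∫⁻ x in closure Ω, g x ^ p ∂(μ.restrict Ω) := by
        rw [Measure.restrict_univ, setLIntegral_restrict_of_subset μ hΩ subset_closure, ← hmap,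
          lintegral_map (hgm.pow_const p) hΦm]
        rfl

theorem upperGradientEnergy_le_comp (hΩ : MeasurableSet Ω) (hΩne : Ω.Nonempty)
    (hι : ∀ x y : Ω, edist (ι x) (ι y) = mazDist Ω x y)
    (hν : ∀ A : Set Z, MeasurableSet A → ν A = μ (Subtype.val '' (ι ⁻¹' A)))
    (hΦ : LipschitzWith 1 Φ) (hΦι : ∀ x : Ω, Φ (ι x) = x) (hp : 0 < p) :
    upperGradientEnergy μ p Ω f ≤ upperGradientEnergy ν p univ (f ∘ Φ) := by
  classical
  refine le_iInf₂ fun g ⟨hgm, hg⟩ => ?_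
  obtain ⟨x₀, hx₀⟩ := hΩne
  set θ : X → Z := fun x => if hx : x ∈ Ω then ι ⟨x, hx⟩ else ι ⟨x₀, hx₀⟩
  have hθ : ∀ x : Ω, θ x = ι x := fun x => dif_pos x.2
  have hθμ : ∀ A, MeasurableSet A → μ.restrict Ω (θ ⁻¹' A) ≤ ν A := fun A hA => by
    rw [Measure.restrict_apply' hΩ, hν A hA]
    refine measure_mono ?_
    rintro x ⟨hxA, hxΩ⟩
    exact ⟨⟨x, hxΩ⟩, by rwa [mem_preimage, ← hθ], rfl⟩
  obtain ⟨χ, hχm, hχ, hχint⟩ := exists_measurable_ge_comp_lintegral_le hθμ (hgm.pow_const p)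
  have hUG : IsUpperGradientOn Ω (fun x => χ x ^ p⁻¹) (fun x => (f x : EReal)) :=
    hg.of_comp_mazurkiewiczIncl (F := fun x => (f x : EReal)) hι hΦ hΦι hθ fun x _ =>
      (ENNReal.le_rpow_inv_iff hp).2 (hχ x)
  calc upperGradientEnergy μ p Ω f ≤ ∫⁻ x in Ω, (χ x ^ p⁻¹) ^ p ∂μ :=
        upperGradientEnergy_le (hχm.pow_const _) hUG
    _ = ∫⁻ x, χ x ∂(μ.restrict Ω) := by
        simp_rw [← ENNReal.rpow_mul, inv_mul_cancel₀ hp.ne', ENNReal.rpow_one]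
    _ ≤ ∫⁻ z in univ, g z ^ p ∂ν := by rw [Measure.restrict_univ]; exact hχint

end EnergyComparison

theorem statement7_general {X : Type*} [MetricSpace X]
    [MeasurableSpace X] [BorelSpace X]
    (μ : Measure X) (p : ℝ) (hp : 1 < p)
    (Ω : Set X) (hΩ : IsBoundedDomain Ω)
    (Z : Type*) [MetricSpace Z] [MeasurableSpace Z] [BorelSpace Z]
    (ι : Ω → Z) (hι : ∀ x y : Ω, edist (ι x) (ι y) = mazDist Ω (x : X) (y : X))
    (hdense : DenseRange ι) (ν : Measure Z)
    (hν : ∀ A : Set Z, MeasurableSet A → ν A = μ (Subtype.val '' (ι ⁻¹' A)))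
    (Φ : Z → X) (hΦ : LipschitzWith 1 Φ) (hΦι : ∀ x : Ω, Φ (ι x) = (x : X))
    (f : X → ℝ) (hf : MemNp (μ.restrict Ω) p (closure Ω) f) :
    MemNp ν p (Set.univ : Set Z) (f ∘ Φ) ∧
    npEnergyOn ν p (Set.univ : Set Z) (f ∘ Φ) = npEnergyOn μ p Ω f ∧
    npEnergyOn μ p Ω f = npEnergyOn (μ.restrict Ω) p (closure Ω) f := by
  obtain ⟨hΩo, hΩc, -⟩ := hΩ
  have hΩm := hΩo.measurableSet
  have hΦm : Measurable Φ := hΦ.continuous.measurable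
  have hmap := map_eq_restrict_of_forall_apply_eq hν hΦι hΦm
  have hcl := upperGradientEnergy_restrict_closure μ hΩo hp.le (ENNReal.add_ne_top.1 hf.2).2
  have hZ := upperGradientEnergy_comp_le_restrict_closure (f := f) (p := p) hΩm hι hdense hΦ hΦι
    hΦm hmap
  have hΩZ := upperGradientEnergy_le_comp (f := f) hΩm hΩc.nonempty hι hν hΦ hΦι
    (zero_lt_one.trans hp)
  have hLp : ∫⁻ z in univ, ENNReal.ofReal |(f ∘ Φ) z| ^ p ∂ν =
      ∫⁻ x in Ω, ENNReal.ofReal |f x| ^ p ∂μ := by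
    rw [Measure.restrict_univ, ← hmap, lintegral_map (hf.1.abs.ennreal_ofReal.pow_const p) hΦm]
    rfl
  have hE₁ : npEnergyOn ν p univ (f ∘ Φ) = npEnergyOn μ p Ω f := by
    rw [npEnergyOn_eq_add, npEnergyOn_eq_add, hLp, le_antisymm (hZ.trans hcl.le) hΩZ]
  have hE₂ : npEnergyOn μ p Ω f = npEnergyOn (μ.restrict Ω) p (closure Ω) f := by
    rw [npEnergyOn_eq_add, npEnergyOn_eq_add, setLIntegral_restrict_of_subset μ hΩm subset_closure,
      hcl]
  exact ⟨⟨hf.1.comp hΦm, (hE₁.trans hE₂).symm ▸ hf.2⟩, hE₁, hE₂⟩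

theorem statement7 {X : Type*} [MetricSpace X] [CompleteSpace X]
    [MeasurableSpace X] [BorelSpace X]
    (μ : Measure X) (hμc : μ.IsComplete) (hball : BallRegular μ)
    (hdbl : DoublingMeasure' μ) (p : ℝ) (hp : 1 < p) (hPI : PoincareInequality μ p)
    (Ω : Set X) (hΩ : IsBoundedDomain Ω) (hfc : FinConnAtBoundary Ω)
    (Z : Type*) [MetricSpace Z] [CompleteSpace Z] [MeasurableSpace Z] [BorelSpace Z]
    (ι : Ω → Z) (hι : ∀ x y : Ω, edist (ι x) (ι y) = mazDist Ω (x : X) (y : X))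
    (hdense : DenseRange ι) (ν : Measure Z)
    (hν : ∀ A : Set Z, MeasurableSet A → ν A = μ (Subtype.val '' (ι ⁻¹' A)))
    (Φ : Z → X) (hΦ : LipschitzWith 1 Φ) (hΦι : ∀ x : Ω, Φ (ι x) = (x : X))
    (f : X → ℝ) (hf : MemNp (μ.restrict Ω) p (closure Ω) f) :
    MemNp ν p (Set.univ : Set Z) (f ∘ Φ) ∧
    npEnergyOn ν p (Set.univ : Set Z) (f ∘ Φ) = npEnergyOn μ p Ω f ∧
    npEnergyOn μ p Ω f = npEnergyOn (μ.restrict Ω) p (closure Ω) f :=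
  statement7_general μ p hp Ω hΩ Z ι hι hdense ν hν Φ hΦ hΦι f hf

end
end

section
/- Let X be a metric measure space, Ω ⊆ X a nonempty open set, and 1 ≤ p < ∞. If f : clΩ → [-∞,∞] is quasicontinuous with respect to (clΩ;μ₀) (i.e. Cp(·;(clΩ,μ₀))-quasicontinuous), then f is bCp(·;Ω)-quasicontinuous. -/
open Set MeasureTheory Filter ENNReal NNReal Metric Topology

noncomputable section

lemma lintegral_closure_restrict {X : Type*} [MetricSpace X] [MeasurableSpace X]
    [BorelSpace X] (μ : Measure X) (Ω : Set X) (F : X → ℝ≥0∞) :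
    (∫⁻ y in closure Ω, F y ∂(μ.restrict Ω)) = ∫⁻ y in Ω, F y ∂μ := by
  rw [Measure.restrict_restrict measurableSet_closure,
    Set.inter_eq_right.mpr subset_closure]

lemma energy_le {X : Type*} [MetricSpace X] [MeasurableSpace X] [BorelSpace X]
    (μ : Measure X) (Ω : Set X) (p : ℝ) (u : X → ℝ) :
    npEnergyOn μ p Ω u ≤ npEnergyOn (μ.restrict Ω) p (closure Ω) u := by
  unfold npEnergyOn npEnergyWith
  rw [lintegral_closure_restrict]
  refine add_le_add le_rfl ?_
  refine le_iInf₂ fun g hg => ?_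
  rw [lintegral_closure_restrict μ Ω (fun y => g y ^ p)]
  exact iInf₂_le g ⟨hg.1, fun γ L hL hmap har =>
    hg.2 γ L hL (hmap.mono_right subset_closure) har⟩

/-! ### Statement 14 -/

theorem statement14 {X : Type*} [MetricSpace X] [MeasurableSpace X] [BorelSpace X]
    (μ : Measure X) (hμc : μ.IsComplete) (hball : BallRegular μ)
    (Ω : Set X) (hΩo : IsOpen Ω) (hΩne : Ω.Nonempty) (p : ℝ) (hp : 1 ≤ p)
    (f : X → EReal)
    (hf : ∀ ε : ℝ≥0∞, 0 < ε → ∃ U : Set X,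
      (∃ V : Set X, IsOpen V ∧ U = V ∩ closure Ω) ∧
      CpOn (μ.restrict Ω) p (closure Ω) U < ε ∧
      (∀ x ∈ closure Ω \ U, f x ≠ ⊤ ∧ f x ≠ ⊥) ∧ ContinuousOn f (closure Ω \ U)) :
    ∀ ε : ℝ≥0∞, 0 < ε → ∃ U : Set X,
      (∃ V : Set X, IsOpen V ∧ U = V ∩ closure Ω) ∧
      bCpOn μ p Ω U < ε ∧
      (∀ x ∈ closure Ω \ U, f x ≠ ⊤ ∧ f x ≠ ⊥) ∧ ContinuousOn f (closure Ω \ U) := by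
  intro ε hε
  obtain ⟨U, ⟨V, hVo, hUV⟩, hCp, hfin, hcont⟩ := hf ε hε
  refine ⟨U, ⟨V, hVo, hUV⟩, lt_of_le_of_lt ?_ hCp, hfin, hcont⟩
  -- bCp(U;Ω) ≤ Cp(U; (clΩ, μ₀))
  refine le_iInf₂ fun u hu => ?_
  obtain ⟨⟨humeas, huen⟩, huone⟩ := hu
  have hle := energy_le μ Ω p u
  refine le_trans (iInf₂_le u ⟨⟨humeas, ?_⟩, ?_, ?_⟩) hle
  · exact fun h => huen (top_le_iff.mp (h ▸ hle))
  · intro x hx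
    exact (huone x hx.1).ge
  · intro x hx
    have hxV : x ∈ V := (hUV ▸ hx.1).1
    have hev : ∀ᶠ y in nhdsWithin x Ω, (1 : EReal) ≤ (u y : EReal) := by
      filter_upwards [nhdsWithin_le_nhds (hVo.mem_nhds hxV),
        self_mem_nhdsWithin] with y hyV hyΩ
      have : y ∈ U := hUV ▸ ⟨hyV, subset_closure hyΩ⟩
      rw [huone y this]
      norm_num
    exact Filter.le_liminf_of_le (by isBoundedDefault) hev

end
end
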